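/- Let H be a Hilbert space, K an infinite-dimensional Hilbert space, and A ⊆ B(H) a unital WOT-closed algebra, and write A ⊗ 1 := {X ⊗ I_K : X ∈ A}. Then every T ∈ Alg Lat (A ⊗ 1) lies in (1 ⊗ B(K))' = B(H) ⊗ 1, i.e. T = Y ⊗ I_K for some Y ∈ B(H). -/

import Mathlib

def invLat {H : Type*} [NormedAddCommGroup H] [InnerProductSpace ℂ H]
    (A : Set (H →L[ℂ] H)) : Set (Submodule ℂ H) :=
  {M | IsClosed (M : Set H) ∧ ∀ T ∈ A, ∀ x ∈ M, T x ∈ M}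

def algLat {H : Type*} [NormedAddCommGroup H] [InnerProductSpace ℂ H]
    (A : Set (H →L[ℂ] H)) : Set (H →L[ℂ] H) :=
  {T | ∀ M ∈ invLat A, ∀ x ∈ M, T x ∈ M}




open ContinuousLinearMap Submodule

noncomputable section

local notation "⟪" x ", " y "⟫" => @inner ℂ _ _ x y

lemma exists_cuntz_pair (K : Type*) [NormedAddCommGroup K] [InnerProductSpace ℂ K]
    [CompleteSpace K] (hK : ¬ FiniteDimensional ℂ K) :
    ∃ u w : K →L[ℂ] K, star u * u = 1 ∧ star w * w = 1 ∧ star u * w = 0 ∧ star w * u = 0 ∧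
      u * star u + w * star w = 1 := by
  classical
  obtain ⟨s, b, hb⟩ := exists_hilbertBasis ℂ K
  -- s is infinite
  have hinf : Infinite s := by
    rw [Set.infinite_coe_iff]
    by_contra h
    rw [Set.not_infinite] at h
    apply hK
    have h1 : FiniteDimensional ℂ (span ℂ (Set.range ⇑b)) := by
      apply FiniteDimensional.span_of_finite
      haveI := h.to_subtype
      exact Set.finite_range ⇑b
    have h2 : (span ℂ (Set.range ⇑b)).topologicalClosure = span ℂ (Set.range ⇑b) :=
      IsClosed.submodule_topologicalClosure_eq (Submodule.closed_of_finiteDimensional _)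
    have h3 : span ℂ (Set.range ⇑b) = ⊤ := by rw [← h2]; exact b.dense_span
    rw [h3] at h1
    exact FiniteDimensional.of_surjective (⊤ : Submodule ℂ K).subtype
      (fun x => ⟨⟨x, trivial⟩, rfl⟩)
  -- an equivalence s ⊕ s ≃ s
  have hcard : Cardinal.mk (s ⊕ s) = Cardinal.mk s := by
    simp only [Cardinal.mk_sum, Cardinal.lift_id]
    exact Cardinal.add_eq_self (Cardinal.infinite_iff.mp hinf)
  obtain ⟨e⟩ := Cardinal.eq.mp hcard
  -- a Hilbert basis of K indexed by s ⊕ s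
  let b1 : HilbertBasis (s ⊕ s) ℂ K :=
    HilbertBasis.mk (b.orthonormal.comp ⇑e e.injective)
      (by
        rw [Set.range_comp, e.surjective.range_eq, Set.image_univ]
        rw [b.dense_span])
  -- a Hilbert basis of WithLp 2 (K × K) indexed by s ⊕ s
  let v2 : s ⊕ s → WithLp 2 (K × K) :=
    Sum.elim (fun i => (WithLp.equiv 2 (K × K)).symm (b i, 0))
      (fun i => (WithLp.equiv 2 (K × K)).symm (0, b i))
  have hv2 : Orthonormal ℂ v2 := by
    rw [orthonormal_iff_ite]
    have hbo := orthonormal_iff_ite.mp b.orthonormal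
    rintro (i | i) (j | j) <;>
      simp [v2, WithLp.prod_inner_apply, hbo i j, Sum.inl.injEq, Sum.inr.injEq]
  have hbot : (span ℂ (Set.range ⇑b))ᗮ = ⊥ :=
    Submodule.topologicalClosure_eq_top_iff.mp b.dense_span
  let b2 : HilbertBasis (s ⊕ s) ℂ (WithLp 2 (K × K)) :=
    HilbertBasis.mkOfOrthogonalEqBot hv2 (by
      rw [Submodule.eq_bot_iff]
      intro z hz
      have hgen : ∀ j, ⟪v2 j, z⟫ = 0 := fun j =>
        inner_right_of_mem_orthogonal (Submodule.subset_span (Set.mem_range_self j)) hz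
      have h1 : z.fst = 0 := by
        have : z.fst ∈ (span ℂ (Set.range ⇑b))ᗮ := by
          rw [Submodule.mem_orthogonal]
          intro x hx
          induction hx using Submodule.span_induction with
          | mem x hx =>
            obtain ⟨i, rfl⟩ := hx
            have := hgen (Sum.inl i)
            simpa [v2, WithLp.prod_inner_apply] using this
          | zero => simp
          | add x y _ _ hx hy => simp [inner_add_left, hx, hy]
          | smul c x _ hx => simp [inner_smul_left, hx]
        rw [hbot] at this
        simpa using this
      have h2 : z.snd = 0 := by
        have : z.snd ∈ (span ℂ (Set.range ⇑b))ᗮ := by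
          rw [Submodule.mem_orthogonal]
          intro x hx
          induction hx using Submodule.span_induction with
          | mem x hx =>
            obtain ⟨i, rfl⟩ := hx
            have := hgen (Sum.inr i)
            simpa [v2, WithLp.prod_inner_apply] using this
          | zero => simp
          | add x y _ _ hx hy => simp [inner_add_left, hx, hy]
          | smul c x _ hx => simp [inner_smul_left, hx]
        rw [hbot] at this
        simpa using this
      have : ⟪z, z⟫ = 0 := by
        rw [WithLp.prod_inner_apply, WithLp.ofLp_fst, WithLp.ofLp_snd, h1, h2]; simp
      exact inner_self_eq_zero.mp this)
  -- the isometric isomorphism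
  let Φ : WithLp 2 (K × K) ≃ₗᵢ[ℂ] K := b2.repr.trans b1.repr.symm
  let E : WithLp 2 (K × K) ≃L[ℂ] K × K := WithLp.prodContinuousLinearEquiv 2 ℂ K K
  let J1 : K →L[ℂ] WithLp 2 (K × K) :=
    E.symm.toContinuousLinearMap ∘L ContinuousLinearMap.inl ℂ K K
  let J2 : K →L[ℂ] WithLp 2 (K × K) :=
    E.symm.toContinuousLinearMap ∘L ContinuousLinearMap.inr ℂ K K
  let u : K →L[ℂ] K := (Φ : WithLp 2 (K × K) →L[ℂ] K) ∘L J1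
  let w : K →L[ℂ] K := (Φ : WithLp 2 (K × K) →L[ℂ] K) ∘L J2
  have hux : ∀ x : K, u x = Φ ((WithLp.equiv 2 (K × K)).symm (x, 0)) := fun x => rfl
  have hwx : ∀ x : K, w x = Φ ((WithLp.equiv 2 (K × K)).symm (0, x)) := fun x => rfl
  have hinner_uu : ∀ x y : K, ⟪u x, u y⟫ = ⟪x, y⟫ := by
    intro x y
    rw [hux, hux, Φ.inner_map_map, WithLp.prod_inner_apply]
    simp
  have hinner_ww : ∀ x y : K, ⟪w x, w y⟫ = ⟪x, y⟫ := by
    intro x y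
    rw [hwx, hwx, Φ.inner_map_map, WithLp.prod_inner_apply]
    simp
  have hinner_uw : ∀ x y : K, ⟪u x, w y⟫ = 0 := by
    intro x y
    rw [hux, hwx, Φ.inner_map_map, WithLp.prod_inner_apply]
    simp
  have hinner_wu : ∀ x y : K, ⟪w x, u y⟫ = 0 := by
    intro x y
    rw [hwx, hux, Φ.inner_map_map, WithLp.prod_inner_apply]
    simp
  refine ⟨u, w, ?_, ?_, ?_, ?_, ?_⟩
  · ext y
    apply ext_inner_left ℂ
    intro z
    simp only [ContinuousLinearMap.mul_apply, star_eq_adjoint, ContinuousLinearMap.one_apply]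
    rw [adjoint_inner_right, hinner_uu]
  · ext y
    apply ext_inner_left ℂ
    intro z
    simp only [ContinuousLinearMap.mul_apply, star_eq_adjoint, ContinuousLinearMap.one_apply]
    rw [adjoint_inner_right, hinner_ww]
  · ext y
    apply ext_inner_left ℂ
    intro z
    simp only [ContinuousLinearMap.mul_apply, star_eq_adjoint, zero_apply]
    rw [adjoint_inner_right, hinner_uw, inner_zero_right]
  · ext y
    apply ext_inner_left ℂ
    intro z
    simp only [ContinuousLinearMap.mul_apply, star_eq_adjoint, zero_apply]
    rw [adjoint_inner_right, hinner_wu, inner_zero_right]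
  · ext z
    have keyu : ∀ v : K, ⟪u v, z⟫ = ⟪v, (Φ.symm z).fst⟫ := by
      intro v
      conv_lhs => rw [hux v, ← Φ.apply_symm_apply z]
      rw [Φ.inner_map_map, WithLp.prod_inner_apply]
      simp
    have keyw : ∀ v : K, ⟪w v, z⟫ = ⟪v, (Φ.symm z).snd⟫ := by
      intro v
      conv_lhs => rw [hwx v, ← Φ.apply_symm_apply z]
      rw [Φ.inner_map_map, WithLp.prod_inner_apply]
      simp
    have ha : adjoint u z = (Φ.symm z).fst :=
      ext_inner_left ℂ (fun v => by rw [adjoint_inner_right, keyu v])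
    have hb : adjoint w z = (Φ.symm z).snd :=
      ext_inner_left ℂ (fun v => by rw [adjoint_inner_right, keyw v])
    simp only [ContinuousLinearMap.add_apply, ContinuousLinearMap.mul_apply, star_eq_adjoint, ContinuousLinearMap.one_apply]
    rw [ha, hb, hux, hwx, ← Φ.map_add]
    have hsum : ((WithLp.equiv 2 (K × K)).symm ((Φ.symm z).fst, 0)
        + (WithLp.equiv 2 (K × K)).symm (0, (Φ.symm z).snd)) = Φ.symm z := by
      apply (WithLp.prodContinuousLinearEquiv 2 ℂ K K).injective
      apply Prod.ext <;> simp
    rw [hsum, Φ.apply_symm_apply]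

end

/-- Every operator in `Alg Lat (A ⊗ 1)` is of the form `Y ⊗ I_K`.  Here the Hilbert space
tensor product `H ⊗ K` is modelled abstractly: `amp : B(H) → B(G)` is the ampliation
`X ↦ X ⊗ I_K` and `ampK : B(K) → B(G)` is `S ↦ I_H ⊗ S`; they commute pointwise, and the
commutation theorem `(1 ⊗ B(K))' = B(H) ⊗ 1` is the hypothesis `hdouble`.  `A` is a unital
WOT-closed algebra and `K` is infinite-dimensional. -/
theorem stmt19 {H K G : Type*}
    [NormedAddCommGroup H] [InnerProductSpace ℂ H] [CompleteSpace H]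
    [NormedAddCommGroup K] [InnerProductSpace ℂ K] [CompleteSpace K]
    [NormedAddCommGroup G] [InnerProductSpace ℂ G] [CompleteSpace G]
    (hK : ¬ FiniteDimensional ℂ K)
    (A : Subalgebra ℂ (H →L[ℂ] H))
    (hWOT : IsClosed ((ContinuousLinearMapWOT.ofCLM : (H →L[ℂ] H) → _) '' (A : Set (H →L[ℂ] H))))
    (amp : (H →L[ℂ] H) →⋆ₐ[ℂ] (G →L[ℂ] G))
    (ampK : (K →L[ℂ] K) →⋆ₐ[ℂ] (G →L[ℂ] G))
    (hcomm : ∀ (X : H →L[ℂ] H) (S : K →L[ℂ] K), Commute (amp X) (ampK S))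
    (hdouble : Set.centralizer (Set.range ampK) = Set.range amp)
    (T : G →L[ℂ] G) (hT : T ∈ algLat ((fun X => amp X) '' (A : Set (H →L[ℂ] H)))) :
    ∃ Y : H →L[ℂ] H, T = amp Y := by
  classical
  -- Step 1: T commutes with `ampK p` for every idempotent `p`.
  have key : ∀ p : K →L[ℂ] K, p * p = p → Commute T (ampK p) := by
    intro p hp
    set q : G →L[ℂ] G := ampK p with hqdef
    have hq2 : q * q = q := by rw [hqdef, ← map_mul, hp]
    have hqcomm : ∀ X : H →L[ℂ] H, Commute (amp X) q := fun X => hcomm X p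
    -- the range of q, as the kernel of 1 - q, is a closed invariant subspace
    have hM1 : LinearMap.ker ((1 - q : G →L[ℂ] G) : G →ₗ[ℂ] G) ∈ invLat ((fun X => amp X) '' (A : Set (H →L[ℂ] H))) := by
      refine ⟨ContinuousLinearMap.isClosed_ker _, ?_⟩
      rintro _ ⟨X, hX, rfl⟩ x hx
      rw [LinearMap.mem_ker, ContinuousLinearMap.coe_coe] at hx ⊢
      have hc : Commute (amp X) (1 - q) := (Commute.one_right (amp X)).sub_right (hqcomm X)
      have := congrArg (fun f : G →L[ℂ] G => f x) hc.eq.symm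
      simp only [ContinuousLinearMap.mul_apply] at this
      rw [this, hx, map_zero]
    have hM2 : LinearMap.ker (q : G →ₗ[ℂ] G) ∈ invLat ((fun X => amp X) '' (A : Set (H →L[ℂ] H))) := by
      refine ⟨ContinuousLinearMap.isClosed_ker _, ?_⟩
      rintro _ ⟨X, hX, rfl⟩ x hx
      rw [LinearMap.mem_ker, ContinuousLinearMap.coe_coe] at hx ⊢
      have := congrArg (fun f : G →L[ℂ] G => f x) (hqcomm X).eq.symm
      simp only [ContinuousLinearMap.mul_apply] at this
      rw [this, hx, map_zero]
    have hqq : ∀ y : G, q (q y) = q y := by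
      intro y
      have := congrArg (fun f : G →L[ℂ] G => f y) hq2
      simpa [ContinuousLinearMap.mul_apply] using this
    have h1 : ∀ y : G, q (T (q y)) = T (q y) := by
      intro y
      have hmem : q y ∈ LinearMap.ker ((1 - q : G →L[ℂ] G) : G →ₗ[ℂ] G) := by
        rw [LinearMap.mem_ker]
        simp [ContinuousLinearMap.sub_apply, hqq y]
      have := hT _ hM1 (q y) hmem
      rw [LinearMap.mem_ker] at this
      have h' : T (q y) - q (T (q y)) = 0 := by
        simpa [ContinuousLinearMap.sub_apply] using this
      have := sub_eq_zero.mp h'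
      exact this.symm
    have h2 : ∀ y : G, q (T (y - q y)) = 0 := by
      intro y
      have hmem : y - q y ∈ LinearMap.ker (q : G →ₗ[ℂ] G) := by
        rw [LinearMap.mem_ker, ContinuousLinearMap.coe_coe, map_sub, hqq y, sub_self]
      have := hT _ hM2 (y - q y) hmem
      rwa [LinearMap.mem_ker] at this
    ext x
    simp only [ContinuousLinearMap.mul_apply]
    have expand : q (T x) = q (T (q x)) + q (T (x - q x)) := by
      rw [← map_add, ← map_add, add_sub_cancel]
    rw [show T (q x) = q (T x) from by rw [expand, h1 x, h2 x, add_zero]]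
  -- Step 2: closure properties of { S | Commute T (ampK S) }
  have hadd : ∀ S1 S2 : K →L[ℂ] K, Commute T (ampK S1) → Commute T (ampK S2) →
      Commute T (ampK (S1 + S2)) := by
    intro S1 S2 h1 h2; rw [map_add]; exact h1.add_right h2
  have hmul : ∀ S1 S2 : K →L[ℂ] K, Commute T (ampK S1) → Commute T (ampK S2) →
      Commute T (ampK (S1 * S2)) := by
    intro S1 S2 h1 h2; rw [map_mul]; exact h1.mul_right h2
  have hsub : ∀ S1 S2 : K →L[ℂ] K, Commute T (ampK S1) → Commute T (ampK S2) →
      Commute T (ampK (S1 - S2)) := by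
    intro S1 S2 h1 h2; rw [map_sub]; exact h1.sub_right h2
  -- Step 3: using a Cuntz pair, T commutes with everything in the range of ampK
  obtain ⟨u, w, huu, hww, huw, hwu, hfull⟩ := exists_cuntz_pair K hK
  have hA : ∀ R : K →L[ℂ] K, Commute T (ampK (u * R * star w)) := by
    intro R
    have hidem : (u * R * star w + w * star w) * (u * R * star w + w * star w)
        = u * R * star w + w * star w := by
      have e1 : (u * R * star w) * (u * R * star w) = 0 := by
        calc (u * R * star w) * (u * R * star w) = u * R * (star w * u) * R * star w := by noncomm_ring
        _ = 0 := by rw [hwu]; noncomm_ring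
      have e2 : (u * R * star w) * (w * star w) = u * R * star w := by
        calc (u * R * star w) * (w * star w) = u * R * (star w * w) * star w := by noncomm_ring
        _ = u * R * star w := by rw [hww]; noncomm_ring
      have e3 : (w * star w) * (u * R * star w) = 0 := by
        calc (w * star w) * (u * R * star w) = w * (star w * u) * R * star w := by noncomm_ring
        _ = 0 := by rw [hwu]; noncomm_ring
      have e4 : (w * star w) * (w * star w) = w * star w := by
        calc (w * star w) * (w * star w) = w * (star w * w) * star w := by noncomm_ring
        _ = w * star w := by rw [hww]; noncomm_ring
      calc (u * R * star w + w * star w) * (u * R * star w + w * star w)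
          = (u * R * star w) * (u * R * star w) + (u * R * star w) * (w * star w)
            + ((w * star w) * (u * R * star w) + (w * star w) * (w * star w)) := by noncomm_ring
      _ = u * R * star w + w * star w := by rw [e1, e2, e3, e4]; noncomm_ring
    have hww_idem : (w * star w) * (w * star w) = w * star w := by
      calc (w * star w) * (w * star w) = w * (star w * w) * star w := by noncomm_ring
      _ = w * star w := by rw [hww]; noncomm_ring
    have h1 := key _ hidem
    have h2 := key _ hww_idem
    have := hsub _ _ h1 h2
    simpa using this
  have hB : ∀ R : K →L[ℂ] K, Commute T (ampK (w * R * star u)) := by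
    intro R
    have hidem : (w * R * star u + u * star u) * (w * R * star u + u * star u)
        = w * R * star u + u * star u := by
      have e1 : (w * R * star u) * (w * R * star u) = 0 := by
        calc (w * R * star u) * (w * R * star u) = w * R * (star u * w) * R * star u := by noncomm_ring
        _ = 0 := by rw [huw]; noncomm_ring
      have e2 : (w * R * star u) * (u * star u) = w * R * star u := by
        calc (w * R * star u) * (u * star u) = w * R * (star u * u) * star u := by noncomm_ring
        _ = w * R * star u := by rw [huu]; noncomm_ring
      have e3 : (u * star u) * (w * R * star u) = 0 := by
        calc (u * star u) * (w * R * star u) = u * (star u * w) * R * star u := by noncomm_ring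
        _ = 0 := by rw [huw]; noncomm_ring
      have e4 : (u * star u) * (u * star u) = u * star u := by
        calc (u * star u) * (u * star u) = u * (star u * u) * star u := by noncomm_ring
        _ = u * star u := by rw [huu]; noncomm_ring
      calc (w * R * star u + u * star u) * (w * R * star u + u * star u)
          = (w * R * star u) * (w * R * star u) + (w * R * star u) * (u * star u)
            + ((u * star u) * (w * R * star u) + (u * star u) * (u * star u)) := by noncomm_ring
      _ = w * R * star u + u * star u := by rw [e1, e2, e3, e4]; noncomm_ring
    have huu_idem : (u * star u) * (u * star u) = u * star u := by
      calc (u * star u) * (u * star u) = u * (star u * u) * star u := by noncomm_ring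
      _ = u * star u := by rw [huu]; noncomm_ring
    have h1 := key _ hidem
    have h2 := key _ huu_idem
    have := hsub _ _ h1 h2
    simpa using this
  have hC : ∀ R : K →L[ℂ] K, Commute T (ampK (u * R * star u)) := by
    intro R
    have := hmul _ _ (hA R) (hB 1)
    have heq : (u * R * star w) * (w * 1 * star u) = u * R * star u := by
      calc (u * R * star w) * (w * 1 * star u) = u * R * (star w * w) * star u := by noncomm_ring
      _ = u * R * star u := by rw [hww]; noncomm_ring
    rwa [heq] at this
  have hD : ∀ R : K →L[ℂ] K, Commute T (ampK (w * R * star w)) := by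
    intro R
    have := hmul _ _ (hB R) (hA 1)
    have heq : (w * R * star u) * (u * 1 * star w) = w * R * star w := by
      calc (w * R * star u) * (u * 1 * star w) = w * R * (star u * u) * star w := by noncomm_ring
      _ = w * R * star w := by rw [huu]; noncomm_ring
    rwa [heq] at this
  have main : ∀ S : K →L[ℂ] K, Commute T (ampK S) := by
    intro S
    have h1 := hC (star u * S * u)
    have h2 := hA (star u * S * w)
    have h3 := hB (star w * S * u)
    have h4 := hD (star w * S * w)
    have hsum := hadd _ _ (hadd _ _ h1 h2) (hadd _ _ h3 h4)
    have heq : u * (star u * S * u) * star u + u * (star u * S * w) * star w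
        + (w * (star w * S * u) * star u + w * (star w * S * w) * star w) = S := by
      calc u * (star u * S * u) * star u + u * (star u * S * w) * star w
          + (w * (star w * S * u) * star u + w * (star w * S * w) * star w)
          = (u * star u + w * star w) * S * (u * star u + w * star w) := by noncomm_ring
      _ = S := by rw [hfull]; noncomm_ring
    rwa [heq] at hsum
  -- Step 4: conclude using the commutation theorem
  have hcent : T ∈ Set.centralizer (Set.range ampK) := by
    rintro _ ⟨S, rfl⟩
    exact (main S).symm.eq
  rw [hdouble] at hcent
  obtain ⟨Y, hY⟩ := hcent
  exact ⟨Y, hY.symm⟩
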